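/- arXiv:2208.10186 — 4 statements merged into one kernel-verified Lean document; each statement's English description precedes it below -/
import Mathlib

section
/- Let Γ be a regular ordered abelian group, i.e., for every nontrivial convex subgroup H of Γ the quotient Γ/H is divisible. Then for every prime p and every infinite convex subset A ⊆ Γ, there exists a ∈ A and b ∈ Γ with a = p · b. -/
/-- A convex subgroup of an ordered abelian group. -/
def IsConvexAddSubgroup {Γ : Type*} [AddCommGroup Γ] [LinearOrder Γ] [IsOrderedAddMonoid Γ] (H : AddSubgroup Γ) : Prop :=
  ∀ h ∈ H, ∀ g : Γ, 0 ≤ g → g ≤ h → g ∈ H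

/-- A regular ordered abelian group: every quotient by a nontrivial convex
subgroup is divisible. -/
def IsRegularOAG (Γ : Type*) [AddCommGroup Γ] [LinearOrder Γ] [IsOrderedAddMonoid Γ] : Prop :=
  ∀ H : AddSubgroup Γ, IsConvexAddSubgroup H → H ≠ ⊥ →
    ∀ x : Γ ⧸ H, ∀ n : ℕ, n ≠ 0 → ∃ y : Γ ⧸ H, n • y = x

/-! An infinite convex set `A` contains an interval `[a, a + p • ε]` with `ε > 0`: a tiny `ε` if `Γ`
is densely ordered, the least positive element otherwise. The elements bounded by multiples
of `ε` form a nontrivial convex subgroup, so regularity writes `a = p • b + h` with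
`|h| ≤ N • ε`, and then some `p • b + k • (p • ε)` with `k : ℤ` lies in `[a, a + p • ε] ⊆ A`. -/

open Set

section

variable {Γ : Type*} [AddCommGroup Γ] [LinearOrder Γ] [IsOrderedAddMonoid Γ]

theorem denselyOrdered_of_forall_not_isLeast_Ioi_zero (h : ∀ u : Γ, ¬IsLeast (Ioi 0) u) :
    DenselyOrdered Γ where
  dense a b hab := by
    have hba : b - a ∈ Ioi 0 := sub_pos.2 hab
    obtain ⟨g, hg, hgb⟩ : ∃ g, 0 < g ∧ g + a < b := by
      simpa [IsLeast, lowerBounds, hba] using h (b - a)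
    exact ⟨a + g, lt_add_of_pos_right a hg, by rwa [add_comm]⟩

theorem finite_Ico_add_nsmul {u : Γ} (hu : IsLeast (Ioi 0) u) (x : Γ) (m : ℕ) :
    (Ico x (x + m • u)).Finite := by
  induction m with
  | zero => simp
  | succ m ih =>
    refine (ih.insert (x + m • u)).subset fun y ⟨hxy, hy⟩ => ?_
    rcases lt_or_ge y (x + m • u) with hlt | hle
    · exact mem_insert_of_mem _ ⟨hxy, hlt⟩
    · refine mem_insert_iff.2 (Or.inl (le_antisymm ?_ hle))
      by_contra! hgt
      have : u ≤ y - (x + m • u) := hu.2 (sub_pos.2 hgt)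
      rw [succ_nsmul, ← add_assoc] at hy
      exact (sub_lt_iff_lt_add'.2 hy).not_ge this

theorem exists_zsmul_mem_Icc {v t : Γ} (hv : 0 < v) {N : ℕ} (ht : |t| ≤ N • v) :
    ∃ k : ℤ, k • v ∈ Icc t (t + v) := by
  have hbdd : ∀ k : ℤ, t ≤ k • v → -(N : ℤ) ≤ k := fun k hk => by
    rw [← zsmul_le_zsmul_iff_left hv, neg_zsmul, natCast_zsmul, neg_le]
    exact (neg_le_neg hk).trans ((neg_le_abs t).trans ht)
  obtain ⟨k, hk, hleast⟩ := Int.exists_least_of_bdd ⟨_, hbdd⟩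
    ⟨N, by rw [natCast_zsmul]; exact (le_abs_self t).trans ht⟩
  have hk' : (k - 1) • v < t := not_le.1 fun h => (hleast _ h).not_gt (sub_one_lt k)
  rw [sub_one_zsmul, ← sub_eq_add_neg] at hk'
  exact ⟨k, hk, (sub_lt_iff_lt_add.1 hk').le⟩

theorem Set.Infinite.exists_add_nsmul_mem {A : Set Γ} (hinf : A.Infinite) (hA : A.OrdConnected)
    (n : ℕ) : ∃ ε > 0, ∃ a ∈ A, a + n • ε ∈ A := by
  by_cases hdisc : ∃ u, IsLeast (Ioi (0 : Γ)) u
  · obtain ⟨u, hu⟩ := hdisc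
    refine ⟨u, hu.1, ?_⟩
    by_contra! H
    obtain ⟨x, hx⟩ := hinf.nonempty
    -- otherwise `A` lies in the finite interval `[x - n • u, x + n • u)`
    refine hinf ((finite_Ico_add_nsmul hu (x - n • u) (n + n)).subset fun a ha => ⟨?_, ?_⟩)
    · by_contra! hlt
      refine H _ (hA.out ha hx ⟨hlt.le, ?_⟩) ?_
      · exact sub_le_self x (nsmul_nonneg hu.1.le n)
      · rwa [sub_add_cancel]
    · rw [add_nsmul, ← add_assoc, sub_add_cancel]
      by_contra! hle
      exact H x hx (hA.out hx ha ⟨le_add_of_nonneg_right (nsmul_nonneg hu.1.le n), hle⟩)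
  · push Not at hdisc
    have := denselyOrdered_of_forall_not_isLeast_Ioi_zero hdisc
    obtain ⟨x, hx, y, hy, hxy⟩ := hinf.nontrivial.exists_lt
    obtain ⟨ε, hε, hnε⟩ := exists_nsmul_lt_of_pos (sub_pos.2 hxy) n
    exact ⟨ε, hε, x, hx, hA.out hx hy
      ⟨le_add_of_nonneg_right (nsmul_nonneg hε.le n), (lt_sub_iff_add_lt'.1 hnε).le⟩⟩

theorem Set.OrdConnected.exists_nsmul_mem {A : Set Γ} (hA : A.OrdConnected) {n : ℕ} (hn : n ≠ 0)
    {ε a b : Γ} (hε : 0 < ε) (ha : a ∈ A) (ha' : a + n • ε ∈ A) {N : ℕ}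
    (hb : |a - n • b| ≤ N • ε) : ∃ c, n • c ∈ A := by
  have hv : 0 < n • ε := nsmul_pos hε hn
  obtain ⟨k, hk₁, hk₂⟩ := exists_zsmul_mem_Icc hv
    (hb.trans (nsmul_le_nsmul_right (le_self_nsmul hε.le hn) N))
  refine ⟨b + k • ε, hA.out ha ha' ⟨?_, ?_⟩⟩
  · rw [smul_add, smul_comm]
    exact sub_le_iff_le_add'.1 hk₁
  · rw [smul_add, smul_comm]
    rw [sub_add_eq_add_sub] at hk₂
    exact le_sub_iff_add_le'.1 hk₂

theorem ArchimedeanClass.isConvexAddSubgroup_closedBallAddSubgroup (c : ArchimedeanClass Γ) :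
    IsConvexAddSubgroup (closedBallAddSubgroup c) := by
  intro h hh g hg hgh
  rw [mem_closedBallAddSubgroup_iff] at hh ⊢
  exact hh.trans (mk_antitoneOn hg (hg.trans hgh) hgh)

theorem IsRegularOAG.exists_sub_nsmul_mem (hreg : IsRegularOAG Γ) {H : AddSubgroup Γ}
    (hconv : IsConvexAddSubgroup H) (hH : H ≠ ⊥) (x : Γ) {n : ℕ} (hn : n ≠ 0) :
    ∃ b, x - n • b ∈ H := by
  obtain ⟨y, hy⟩ := hreg H hconv hH x n hn
  induction y using QuotientAddGroup.induction_on with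
  | H b =>
    refine ⟨b, ?_⟩
    rw [← QuotientAddGroup.mk_nsmul, QuotientAddGroup.eq, neg_add_eq_sub] at hy
    exact hy

theorem IsRegularOAG.exists_abs_sub_nsmul_le (hreg : IsRegularOAG Γ) {ε : Γ} (hε : 0 < ε) (x : Γ)
    {n : ℕ} (hn : n ≠ 0) : ∃ b, ∃ N : ℕ, |x - n • b| ≤ N • ε := by
  have hε' : ε ∈ ArchimedeanClass.closedBallAddSubgroup (ArchimedeanClass.mk ε) :=
    ArchimedeanClass.mem_closedBallAddSubgroup_iff.2 le_rfl
  obtain ⟨b, hb⟩ := hreg.exists_sub_nsmul_mem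
    (ArchimedeanClass.isConvexAddSubgroup_closedBallAddSubgroup _)
    (fun h => hε.ne' (by rwa [h, AddSubgroup.mem_bot] at hε')) x hn
  obtain ⟨N, hN⟩ := ArchimedeanClass.mk_le_mk.1 (ArchimedeanClass.mem_closedBallAddSubgroup_iff.1 hb)
  exact ⟨b, N, by rwa [abs_of_pos hε] at hN⟩

end

/-- If `Γ` is a regular ordered abelian group, then for every prime `p` and every
infinite convex subset `A ⊆ Γ` there are `a ∈ A` and `b ∈ Γ` with `a = p • b`. -/
theorem regular_of_infinite_convex_subset {Γ : Type*} [AddCommGroup Γ] [LinearOrder Γ] [IsOrderedAddMonoid Γ]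
    (hreg : IsRegularOAG Γ) (p : ℕ) (hp : p.Prime) (A : Set Γ) (hA : A.Infinite)
    (hconv : ∀ a ∈ A, ∀ c ∈ A, ∀ b : Γ, a ≤ b → b ≤ c → b ∈ A) :
    ∃ a ∈ A, ∃ b : Γ, a = p • b := by
  have hA' : A.OrdConnected := ⟨fun a ha c hc b hb => hconv a ha c hc b hb.1 hb.2⟩
  obtain ⟨ε, hε, a, ha, ha'⟩ := hA.exists_add_nsmul_mem hA' p
  obtain ⟨b, N, hb⟩ := hreg.exists_abs_sub_nsmul_le hε a hp.ne_zero
  obtain ⟨c, hc⟩ := hA'.exists_nsmul_mem hp.ne_zero hε ha ha' hb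
  exact ⟨_, hc, c, rfl⟩
end

section
/- Every regular discrete ordered abelian group is elementarily equivalent to (ℤ, +, <) in the language of ordered groups. -/
open FirstOrder

/-- Function symbols of the first-order language of ordered abelian groups:
a constant `0`, a unary `-`, and a binary `+`. -/
def oagFunctions : ℕ → Type
  | 0 => Unit
  | 1 => Unit
  | 2 => Unit
  | _ => Empty

/-- Relation symbols: a single binary relation `≤`. -/
def oagRelations : ℕ → Type
  | 2 => Unit
  | _ => Empty

/-- The first-order language of ordered abelian groups. -/
def oagLang : Language := ⟨oagFunctions, oagRelations⟩

/-- Any linearly ordered abelian group is an `oagLang`-structure. -/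
instance oagStructure (Γ : Type*) [AddCommGroup Γ] [LinearOrder Γ] [IsOrderedAddMonoid Γ] :
    oagLang.Structure Γ where
  funMap {n} f x :=
    match n, f with
    | 0, _ => 0
    | 1, _ => -(x 0)
    | 2, _ => x 0 + x 1
    | (_ + 3), f => f.elim
  RelMap {n} r x :=
    match n, r with
    | 0, r => r.elim
    | 1, r => r.elim
    | 2, _ => x 0 ≤ x 1
    | (_ + 3), r => r.elim

/-!
Let `u` be the least positive element. Regularity makes `Γ / mΓ` generated by `u` for every
`m > 0`, so `(Γ, u)`, like `(ℤ, 1)`, satisfies the axioms of Presburger arithmetic. Two such groups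
are compared by a back-and-forth argument: tuples are close at level `N` if they have the same
residues modulo `N !` and every linear form with coefficients at most `N` has the same sign on
both. Closeness at a larger level lets a new element on either side be matched on the other:
if it solves a small linear equation its match is found by division, otherwise it stays far from
all small constraints and a match is found in the right residue class between the transferred
bounds. By induction on formulas, sufficiently close tuples satisfy the same formulas, and the
empty tuples are close at every level.
-/

open Pointwise SignType
open scoped Nat

section AddCommGroup

variable {G : Type*} [AddCommGroup G]

theorem mem_zsmul_top_iff {m : ℤ} {g : G} : g ∈ m • (⊤ : AddSubgroup G) ↔ ∃ x, m • x = g := by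
  simp [AddSubgroup.mem_smul_pointwise_iff_exists]

theorem zsmul_top_le_of_dvd {a b : ℤ} (h : a ∣ b) : b • (⊤ : AddSubgroup G) ≤ a • ⊤ := by
  obtain ⟨c, rfl⟩ := h
  intro g hg
  obtain ⟨x, rfl⟩ := mem_zsmul_top_iff.1 hg
  exact mem_zsmul_top_iff.2 ⟨c • x, by rw [mul_smul]⟩

theorem exists_zsmul_eq_of_sub_mem {u g : G} {k m y : ℤ}
    (h : g - (k * y) • u ∈ (k * m) • (⊤ : AddSubgroup G)) :
    ∃ b : G, k • b = g ∧ b - y • u ∈ m • (⊤ : AddSubgroup G) := by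
  obtain ⟨x, hx⟩ := mem_zsmul_top_iff.1 h
  exact ⟨y • u + m • x, by rw [smul_add, smul_smul, smul_smul, hx]; abel,
    mem_zsmul_top_iff.2 ⟨x, by abel⟩⟩

end AddCommGroup

section OrderedGroup

variable {G : Type*} [AddCommGroup G] [LinearOrder G] [IsOrderedAddMonoid G] {u : G}

theorem sign_zsmul_of_pos_left {k : ℤ} (hk : 0 < k) (x : G) : sign (k • x) = sign x :=
  StrictMono.sign_comp (f := zsmulAddGroupHom k) (zsmul_strictMono_right G hk) x

theorem sign_zsmul_of_pos_right (hu : 0 < u) (d : ℤ) : sign (d • u) = sign d :=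
  StrictMono.sign_comp (f := zmultiplesHom G u) (zsmul_left_strictMono hu) d

theorem exists_eq_zsmul_of_abs_le (hu : IsLeast {g : G | 0 < g} u) {T : ℤ} {g : G}
    (hg : |g| ≤ T • u) : ∃ t : ℤ, |t| ≤ T ∧ g = t • u := by
  have hbdd : ∀ z : ℤ, z • u ≤ g → z ≤ T := fun z hz =>
    (zsmul_le_zsmul_iff_left hu.1).1 (hz.trans ((le_abs_self g).trans hg))
  have hlow : (-T) • u ≤ g := by rw [neg_zsmul]; exact (neg_le_neg hg).trans (neg_abs_le g)
  obtain ⟨t, ht, htmax⟩ := Int.exists_greatest_of_bdd ⟨T, hbdd⟩ ⟨-T, hlow⟩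
  have hgt : g = t • u := by
    by_contra hne
    have hle : t • u + u ≤ g := le_sub_iff_add_le'.1 (hu.2 (sub_pos.2 (ht.lt_of_ne (Ne.symm hne))))
    have := htmax (t + 1) (by rwa [add_zsmul, one_zsmul])
    omega
  refine ⟨t, (zsmul_le_zsmul_iff_left hu.1).1 ?_, hgt⟩
  rwa [← abs_of_pos hu.1, ← abs_zsmul, abs_of_pos hu.1, ← hgt]

theorem dvd_of_zsmul_mem (hu : IsLeast {g : G | 0 < g} u) {m z : ℤ} (hm : 0 < m)
    (hz : z • u ∈ m • (⊤ : AddSubgroup G)) : m ∣ z := by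
  obtain ⟨x, hx⟩ := mem_zsmul_top_iff.1 hz
  have hρ : (z % m) • u = m • (x - (z / m) • u) := by
    rw [smul_sub, hx, ← mul_smul, ← sub_smul, Int.emod_def]
  rcases (Int.emod_nonneg z hm.ne').lt_or_eq with hpos | hzero
  · have hy : 0 < x - (z / m) • u :=
      (zsmul_lt_zsmul_iff_right hm).1 (by rw [smul_zero, ← hρ]; exact zsmul_pos hu.1 hpos)
    have := (zsmul_le_zsmul_iff_right hm).2 (hu.2 hy)
    rw [← hρ, zsmul_le_zsmul_iff_left hu.1] at this
    exact absurd this (not_le.2 (Int.emod_lt_of_pos z hm))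
  · exact Int.dvd_of_emod_eq_zero hzero.symm

end OrderedGroup

/-- The axioms of Presburger arithmetic, with `u` in the role of `1`. -/
structure IsZGroupUnit {G : Type*} [AddCommGroup G] [LinearOrder G] [IsOrderedAddMonoid G]
    (u : G) : Prop where
  isLeast : IsLeast {g : G | 0 < g} u
  exists_sub_mem : ∀ m : ℤ, 0 < m → ∀ g : G, ∃ z : ℤ, g - z • u ∈ m • (⊤ : AddSubgroup G)

theorem isZGroupUnit_one : IsZGroupUnit (1 : ℤ) where
  isLeast := ⟨(one_pos : (0 : ℤ) < 1), fun _ hg => hg⟩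
  exists_sub_mem _ _ g := ⟨g, by simp⟩

theorem IsRegularOAG.isZGroupUnit {G : Type*} [AddCommGroup G] [LinearOrder G]
    [IsOrderedAddMonoid G] (hreg : IsRegularOAG G) {u : G} (hu : IsLeast {g : G | 0 < g} u) :
    IsZGroupUnit u := by
  refine ⟨hu, fun m hm g => ?_⟩
  let H := (ArchimedeanClass.mk u).closedBallAddSubgroup
  have hconv : IsConvexAddSubgroup H := fun h hh g hg hgh => by
    simp only [H, ArchimedeanClass.mem_closedBallAddSubgroup_iff] at hh ⊢
    exact hh.trans (ArchimedeanClass.mk_le_mk_of_abs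
      (by rwa [abs_of_nonneg hg, abs_of_nonneg (hg.trans hgh)]))
  have hne : H ≠ ⊥ := fun hbot => by
    have hu' : u ∈ H := ArchimedeanClass.mem_closedBallAddSubgroup_iff.2 le_rfl
    rw [hbot, AddSubgroup.mem_bot] at hu'
    exact hu.1.ne' hu'
  obtain ⟨y, hy⟩ := hreg H hconv hne g m.toNat (by omega)
  obtain ⟨y, rfl⟩ := QuotientAddGroup.mk_surjective y
  have hmem : g - m • y ∈ H := by
    have : ((m • y : G) : G ⧸ H) = g := by
      rw [QuotientAddGroup.mk_zsmul, ← Int.toNat_of_nonneg hm.le, natCast_zsmul, hy]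
    simpa [neg_add_eq_sub] using QuotientAddGroup.eq.1 this
  obtain ⟨k, hk⟩ :=
    ArchimedeanClass.mk_le_mk.1 (ArchimedeanClass.mem_closedBallAddSubgroup_iff.1 hmem)
  obtain ⟨t, -, ht⟩ :=
    exists_eq_zsmul_of_abs_le hu (T := k) (by rwa [natCast_zsmul, ← abs_of_pos hu.1])
  exact ⟨t, mem_zsmul_top_iff.2 ⟨y, by rw [← ht]; abel⟩⟩

section ZGroup

variable {G : Type*} [AddCommGroup G] [LinearOrder G] [IsOrderedAddMonoid G] {u : G}

theorem IsZGroupUnit.exists_sub_mem_of_lt (hu : IsZGroupUnit u) {m : ℤ} (hm : 0 < m) (g : G) :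
    ∃ z : ℤ, 0 ≤ z ∧ z < m ∧ g - z • u ∈ m • (⊤ : AddSubgroup G) := by
  obtain ⟨z, hz⟩ := hu.exists_sub_mem m hm g
  refine ⟨z % m, Int.emod_nonneg z hm.ne', Int.emod_lt_of_pos z hm, ?_⟩
  have : g - (z % m) • u = (g - z • u) + m • ((z / m) • u) := by
    rw [Int.emod_def, sub_smul, ← mul_smul]; abel
  rw [this]
  exact add_mem hz (mem_zsmul_top_iff.2 ⟨_, rfl⟩)

theorem IsZGroupUnit.exists_sub_mem_and_zsmul_mem_Ioc (hu : IsZGroupUnit u) {F M : ℤ}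
    (hF : 0 < F) (hM : 0 < M) (r : ℤ) (g : G) :
    ∃ b : G, b - r • u ∈ M • (⊤ : AddSubgroup G) ∧ g < F • b ∧ F • b ≤ g + (F * M) • u := by
  obtain ⟨z, hz0, hzFM, hz⟩ := hu.exists_sub_mem_of_lt (mul_pos hF hM) (g - (F * r) • u)
  obtain ⟨x, hx⟩ := mem_zsmul_top_iff.1 hz
  have hFb : F • (r • u + M • (x + u)) = g + (F * M - z) • u := by
    rw [smul_add, smul_smul, smul_smul, smul_add, hx, sub_smul]; abel
  refine ⟨r • u + M • (x + u), mem_zsmul_top_iff.2 ⟨x + u, by abel⟩, ?_, ?_⟩ <;> rw [hFb]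
  · exact lt_add_of_pos_right g (zsmul_pos hu.isLeast.1 (by omega))
  · exact (add_le_add_iff_left g).2 ((zsmul_le_zsmul_iff_left hu.isLeast.1).2 (by omega))

end ZGroup

/-- The coefficients of `∑ i, c i • x i + d • u`. -/
abbrev LinForm (n : ℕ) := (Fin n → ℤ) × ℤ

namespace LinForm

variable {G : Type*} [AddCommGroup G] {n : ℕ}

def eval (u : G) (w : Fin n → G) : LinForm n →+ G where
  toFun ℓ := ∑ i, ℓ.1 i • w i + ℓ.2 • u
  map_zero' := by simp
  map_add' ℓ ℓ' := by
    simp only [Prod.fst_add, Prod.snd_add, Pi.add_apply, add_smul, Finset.sum_add_distrib]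
    abel

theorem eval_apply (u : G) (w : Fin n → G) (ℓ : LinForm n) :
    eval u w ℓ = ∑ i, ℓ.1 i • w i + ℓ.2 • u := rfl

theorem eval_const (u : G) (w : Fin n → G) (t : ℤ) : eval u w (0, t) = t • u := by
  simp [eval_apply]

theorem eval_snoc (u : G) (w : Fin n → G) (b : G) (c : Fin (n + 1) → ℤ) (d : ℤ) :
    eval u (Fin.snoc w b) (c, d) = c (Fin.last n) • b + eval u w (Fin.init c, d) := by
  simp [eval_apply, Fin.sum_univ_castSucc, Fin.init]
  abel

theorem zsmul_zsmul_add_eval {q k P : ℤ} (hqk : q * k = P) (u : G) (w : Fin n → G) (c : G)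
    (ℓ : LinForm n) : q • (k • c + eval u w ℓ) = P • c + eval u w (q • ℓ) := by
  rw [smul_add, smul_smul, hqk, map_zsmul]

theorem eval_sub_zsmul_mem {u : G} {w : Fin n → G} {r : Fin n → ℤ} {H : AddSubgroup G}
    (hr : ∀ i, w i - r i • u ∈ H) (ℓ : LinForm n) :
    eval u w ℓ - eval 1 r ℓ • u ∈ H := by
  have : eval u w ℓ - eval 1 r ℓ • u = ∑ i, ℓ.1 i • (w i - r i • u) := by
    simp only [eval_apply, smul_eq_mul, mul_one, add_smul, Finset.sum_smul, mul_smul, smul_sub,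
      Finset.sum_sub_distrib]
    abel
  rw [this]
  exact sum_mem fun i _ => zsmul_mem (hr i) _

theorem norm_init_le (c : Fin (n + 1) → ℤ) (d : ℤ) :
    ‖((Fin.init c, d) : LinForm n)‖ ≤ ‖((c, d) : LinForm (n + 1))‖ := by
  simp only [Prod.norm_def]
  gcongr
  exact (pi_norm_le_iff_of_nonneg (norm_nonneg c)).2 fun i => norm_le_pi_norm c _

theorem abs_last_le (c : Fin (n + 1) → ℤ) (d : ℤ) :
    |(c (Fin.last n) : ℝ)| ≤ ‖((c, d) : LinForm (n + 1))‖ := by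
  rw [← Int.norm_eq_abs, Prod.norm_def]
  exact (norm_le_pi_norm c _).trans (le_max_left _ _)

theorem norm_const (t : ℤ) : ‖((0, t) : LinForm n)‖ = |(t : ℝ)| := by
  simp [Prod.norm_def, Int.norm_eq_abs]

theorem finite_setOf_norm_le (r : ℝ) : {ℓ : LinForm n | ‖ℓ‖ ≤ r}.Finite := by
  simpa [Metric.closedBall, dist_zero_right] using
    (isCompact_closedBall (0 : LinForm n) r).finite_of_discrete

end LinForm

section Approx

variable {G G' : Type*} [AddCommGroup G] [LinearOrder G] [AddCommGroup G'] [LinearOrder G']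
  {u : G} {u' : G'} {n N N' : ℕ}
  {w : Fin n → G} {w' : Fin n → G'}

/-- The invariant of the back-and-forth argument at level `N`. -/
structure Approx (u : G) (u' : G') (N : ℕ) (w : Fin n → G) (w' : Fin n → G') : Prop where
  exists_residues : ∃ r : Fin n → ℤ, ∀ i, w i - r i • u ∈ (N ! : ℤ) • (⊤ : AddSubgroup G) ∧
    w' i - r i • u' ∈ (N ! : ℤ) • (⊤ : AddSubgroup G')
  sign_eval_eq : ∀ ℓ : LinForm n, ‖ℓ‖ ≤ N →
    sign (LinForm.eval u w ℓ) = sign (LinForm.eval u' w' ℓ)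

theorem Approx.symm (h : Approx u u' N w w') : Approx u' u N w' w :=
  ⟨h.1.imp fun _ hr i => (hr i).symm, fun ℓ hℓ => (h.2 ℓ hℓ).symm⟩

theorem Approx.mono (h : Approx u u' N' w w') (hN : N ≤ N') : Approx u u' N w w' := by
  have hdvd : (N ! : ℤ) ∣ N' ! := Int.natCast_dvd_natCast.2 (Nat.factorial_dvd_factorial hN)
  exact ⟨h.1.imp fun _ hr i =>
      ⟨zsmul_top_le_of_dvd hdvd (hr i).1, zsmul_top_le_of_dvd hdvd (hr i).2⟩,
    fun ℓ hℓ => h.2 ℓ (hℓ.trans (by exact_mod_cast hN))⟩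

theorem Approx.exists_residue (h : Approx u u' N w w') (ℓ : LinForm n) :
    ∃ z : ℤ, LinForm.eval u w ℓ - z • u ∈ (N ! : ℤ) • (⊤ : AddSubgroup G) ∧
      LinForm.eval u' w' ℓ - z • u' ∈ (N ! : ℤ) • (⊤ : AddSubgroup G') :=
  let ⟨r, hr⟩ := h.1
  ⟨LinForm.eval 1 r ℓ, LinForm.eval_sub_zsmul_mem (fun i => (hr i).1) ℓ,
    LinForm.eval_sub_zsmul_mem (fun i => (hr i).2) ℓ⟩

theorem Approx.zsmul_lt_eval_sub [IsOrderedAddMonoid G] [IsOrderedAddMonoid G']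
    (h : Approx u u' N w w') {ℓ₁ ℓ₂ : LinForm n} {t : ℤ} (hN : ‖ℓ₁‖ + ‖ℓ₂‖ + |(t : ℝ)| ≤ N)
    (ht : t • u < LinForm.eval u w ℓ₁ - LinForm.eval u w ℓ₂) :
    t • u' < LinForm.eval u' w' ℓ₁ - LinForm.eval u' w' ℓ₂ := by
  have hnorm : ‖ℓ₁ - ℓ₂ - (0, t)‖ ≤ N := by
    rw [← LinForm.norm_const (n := n)] at hN
    exact ((norm_sub_le _ _).trans (by gcongr; exact norm_sub_le _ _)).trans hN
  have := h.2 _ hnorm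
  simp only [map_sub (LinForm.eval u w), map_sub (LinForm.eval u' w'), LinForm.eval_const] at this
  rwa [sign_pos (sub_pos.2 ht), eq_comm, sign_eq_one_iff, sub_pos] at this

theorem approx_nil [IsOrderedAddMonoid G] [IsOrderedAddMonoid G'] (hu : 0 < u) (hu' : 0 < u')
    (w : Fin 0 → G) (w' : Fin 0 → G') (N : ℕ) :
    Approx u u' N w w' :=
  ⟨⟨0, fun i => i.elim0⟩, fun ℓ _ => by
    simp [LinForm.eval_apply, sign_zsmul_of_pos_right hu, sign_zsmul_of_pos_right hu']⟩

theorem Approx.snoc [IsOrderedAddMonoid G] [IsOrderedAddMonoid G'] (h : Approx u u' N' w w')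
    (hN : N ≤ N') {b : G} {b' : G'}
    (hres : ∃ y : ℤ, b - y • u ∈ (N ! : ℤ) • (⊤ : AddSubgroup G) ∧
      b' - y • u' ∈ (N ! : ℤ) • (⊤ : AddSubgroup G'))
    (hsign : ∀ k : ℤ, 0 < k → k ≤ N → ∀ ℓ : LinForm n, ‖ℓ‖ ≤ N →
      sign (k • b + LinForm.eval u w ℓ) = sign (k • b' + LinForm.eval u' w' ℓ)) :
    Approx u u' N (Fin.snoc w b) (Fin.snoc w' b') := by
  have hsign' : ∀ k : ℤ, |k| ≤ N → ∀ ℓ : LinForm n, ‖ℓ‖ ≤ N →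
      sign (k • b + LinForm.eval u w ℓ) = sign (k • b' + LinForm.eval u' w' ℓ) := by
    intro k hk ℓ hℓ
    rcases lt_trichotomy k 0 with hneg | rfl | hpos
    · have := hsign (-k) (neg_pos.2 hneg) (by rw [abs_of_neg hneg] at hk; exact hk) (-ℓ)
        (by rwa [norm_neg])
      rwa [neg_zsmul, neg_zsmul, map_neg, map_neg, ← neg_add, ← neg_add, Left.sign_neg,
        Left.sign_neg, neg_inj] at this
    · simpa using h.2 ℓ (hℓ.trans (by exact_mod_cast hN))
    · exact hsign k hpos ((le_abs_self k).trans hk) ℓ hℓ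
  obtain ⟨r, hr⟩ := (h.mono hN).1
  obtain ⟨y, hy⟩ := hres
  refine ⟨⟨Fin.snoc r y, Fin.lastCases (by simpa using hy) fun i => by simpa using hr i⟩, ?_⟩
  rintro ⟨c, d⟩ hℓ
  rw [LinForm.eval_snoc, LinForm.eval_snoc]
  exact hsign' _ (by exact_mod_cast (LinForm.abs_last_le c d).trans hℓ) _
    ((LinForm.norm_init_le c d).trans hℓ)

end Approx

theorem int_dvd_factorial {k : ℤ} {N : ℕ} (hk : 0 < k) (hkN : k ≤ N) : k ∣ (N ! : ℤ) := by
  lift k to ℕ using hk.le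
  exact Int.natCast_dvd_natCast.2 (Nat.dvd_factorial (by omega) (by omega))

/-- A level from which `Approx.exists_snoc` reaches level `N`: it bounds the coefficients of the
forms compared in either case of the proof, and `N ! * N ! ∣ (bump N)!`. -/
def bump (N : ℕ) : ℕ := 2 * (N + 1) * (N + N ! ^ 2)

theorem two_mul_le_bump (N : ℕ) : 2 * N ≤ bump N := by
  unfold bump
  nlinarith [N.factorial_pos]

theorem factorial_mul_factorial_dvd_factorial_bump (N : ℕ) : N ! * N ! ∣ (bump N)! :=
  (Nat.factorial_mul_factorial_dvd_factorial_add N N).trans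
    (Nat.factorial_dvd_factorial (by linarith [two_mul_le_bump N]))

theorem exact_bound_le_bump (N : ℕ) :
    (N : ℝ) * (N + N ! * N !) + N * N ≤ bump N := by
  have hF : (1 : ℝ) ≤ N ! := by exact_mod_cast N.factorial_pos
  unfold bump
  push_cast
  nlinarith [sq_nonneg (N : ℝ), mul_nonneg (N.cast_nonneg : (0 : ℝ) ≤ N) (sq_nonneg (N ! : ℝ))]

theorem gap_bound_le_bump (N : ℕ) :
    2 * ((N ! : ℝ) * N) + 2 * (N ! * N !) ≤ bump N := by
  have hF : (1 : ℝ) ≤ N ! := by exact_mod_cast N.factorial_pos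
  have hN : (0 : ℝ) ≤ N := N.cast_nonneg
  unfold bump
  push_cast
  nlinarith [mul_le_mul_of_nonneg_left hF (mul_nonneg hN (by linarith : (0 : ℝ) ≤ N !))]

section BackAndForth

variable {G G' : Type*} [AddCommGroup G] [LinearOrder G] [IsOrderedAddMonoid G]
  [AddCommGroup G'] [LinearOrder G'] [IsOrderedAddMonoid G'] {u : G} {u' : G'} {n N N' : ℕ}
  {w : Fin n → G} {w' : Fin n → G'}

-- The residue of `ℓ₀` shows that `ℓ₀` is divisible by `k₀` on the other side too, with a quotient
-- `b'` in the residue class of `b`; signs are compared after multiplication by `k₀`.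
theorem Approx.exists_snoc_of_zsmul_eq (hu : IsLeast {g : G | 0 < g} u)
    (h : Approx u u' (bump N) w w') {b : G} {k₀ : ℤ} {ℓ₀ : LinForm n} (hk₀ : 0 < k₀)
    (hk₀N : k₀ ≤ N) (hℓ₀ : ‖ℓ₀‖ ≤ N + (N ! : ℝ) * N !) (hb : k₀ • b = LinForm.eval u w ℓ₀) :
    ∃ b' : G', Approx u u' N (Fin.snoc w b) (Fin.snoc w' b') := by
  have hdvd : k₀ * N ! ∣ ((bump N)! : ℤ) :=
    (mul_dvd_mul_right (int_dvd_factorial hk₀ hk₀N) _).trans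
      (by exact_mod_cast factorial_mul_factorial_dvd_factorial_bump N)
  obtain ⟨z, hz, hz'⟩ := h.exists_residue ℓ₀
  replace hz := zsmul_top_le_of_dvd hdvd hz
  replace hz' := zsmul_top_le_of_dvd hdvd hz'
  obtain ⟨y, rfl⟩ : k₀ ∣ z := by
    refine dvd_of_zsmul_mem hu hk₀ ?_
    have : z • u = k₀ • b - (LinForm.eval u w ℓ₀ - z • u) := by rw [hb]; abel
    rw [this]
    exact sub_mem (mem_zsmul_top_iff.2 ⟨b, rfl⟩) (zsmul_top_le_of_dvd (dvd_mul_right _ _) hz)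
  obtain ⟨b₀, hb₀, hy⟩ := exists_zsmul_eq_of_sub_mem hz
  obtain ⟨b', hb', hy'⟩ := exists_zsmul_eq_of_sub_mem hz'
  obtain rfl : b = b₀ := zsmul_right_injective hk₀.ne' (hb.trans hb₀.symm)
  refine ⟨b', h.snoc (by linarith [two_mul_le_bump N]) ⟨y, hy, hy'⟩ fun k hk hkN ℓ hℓ => ?_⟩
  have hnorm : ‖k • ℓ₀ + k₀ • ℓ‖ ≤ bump N := by
    have hkN' : ∀ {k : ℤ}, 0 < k → k ≤ N → ‖k‖ ≤ N := fun hk hkN => by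
      rw [Int.norm_eq_abs, abs_of_pos (by exact_mod_cast hk)]; exact_mod_cast hkN
    calc ‖k • ℓ₀ + k₀ • ℓ‖ ≤ ‖k‖ * ‖ℓ₀‖ + ‖k₀‖ * ‖ℓ‖ := by
          rw [← norm_smul, ← norm_smul]; exact norm_add_le _ _
      _ ≤ N * (N + N ! * N !) + N * N := by
          gcongr
          exacts [hkN' hk hkN, hkN' hk₀ hk₀N]
      _ ≤ bump N := exact_bound_le_bump N
  rw [← sign_zsmul_of_pos_left hk₀, ← sign_zsmul_of_pos_left hk₀ (k • b' + _), smul_add, smul_add,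
    smul_comm k₀ k b, smul_comm k₀ k b', hb₀, hb', ← map_zsmul, ← map_zsmul, ← map_zsmul,
    ← map_zsmul, ← map_add, ← map_add]
  exact h.2 _ hnorm

theorem lt_abs_of_not_exists_zsmul_eq (hu : IsLeast {g : G | 0 < g} u) {k T : ℤ} {b : G}
    {ℓ : LinForm n}
    (hne : ¬ ∃ ℓ₀ : LinForm n, ‖ℓ₀‖ ≤ ‖ℓ‖ + T ∧ k • b = LinForm.eval u w ℓ₀) :
    T • u < |k • b + LinForm.eval u w ℓ| := by
  by_contra hle
  obtain ⟨t, ht, heq⟩ := exists_eq_zsmul_of_abs_le hu (not_lt.1 hle)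
  refine hne ⟨(0, t) - ℓ, ?_, ?_⟩
  · calc ‖(0, t) - ℓ‖ ≤ ‖((0, t) : LinForm n)‖ + ‖ℓ‖ := norm_sub_le _ _
      _ ≤ ‖ℓ‖ + T := by rw [LinForm.norm_const, add_comm]; gcongr; exact_mod_cast ht
  · rw [map_sub, LinForm.eval_const, ← heq, add_sub_cancel_right]

theorem exists_forall_le_and_forall_lt {α ι : Type*} [LinearOrder α] [NoMinOrder α] [Nonempty α]
    [Finite ι] (p : ι → Prop) (f g : ι → α) (h : ∀ i j, p i → ¬ p j → f i < g j) :
    ∃ x, (∀ i, p i → f i ≤ x) ∧ ∀ j, ¬ p j → x < g j := by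
  by_cases hp : ∃ i, p i
  · obtain ⟨i, hi, hmax⟩ := Set.exists_max_image {i | p i} f (Set.toFinite _) hp
    exact ⟨f i, hmax, fun j hj => h i j hi hj⟩
  · push Not at hp
    obtain ⟨y, hy⟩ := (Set.finite_range g).bddBelow
    obtain ⟨x, hx⟩ := exists_lt y
    exact ⟨x, fun i hi => (hp i hi).elim, fun j _ => hx.trans_le (hy ⟨j, rfl⟩)⟩

-- In `G` the values `x + E i` of either sign are separated by a gap wider than `2 P² u`; the
-- gap transfers to `G'`, where a window of width `P² u'` inside it meets the residue class of `r`.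
theorem Approx.exists_sign_eq_of_lt_abs (hu : 0 < u) (hu' : IsZGroupUnit u')
    (h : Approx u u' N' w w') {ι : Type*} [Finite ι] (E : ι → LinForm n) {P : ℤ} (hP : 0 < P)
    {B : ℝ} (hE : ∀ i, ‖E i‖ ≤ B) (hBN : 2 * B + 2 * (P * P) ≤ N') (x : G)
    (hx : ∀ i, (P * P) • u < |x + LinForm.eval u w (E i)|) (r : ℤ) :
    ∃ b' : G', b' - r • u' ∈ P • (⊤ : AddSubgroup G') ∧
      ∀ i, sign (x + LinForm.eval u w (E i)) = sign (P • b' + LinForm.eval u' w' (E i)) := by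
  have hPP : 0 < P * P := mul_pos hP hP
  have hpos : ∀ i, 0 < x + LinForm.eval u w (E i) →
      (P * P) • u < x + LinForm.eval u w (E i) := fun i hi => by
    simpa only [abs_of_pos hi] using hx i
  have hneg : ∀ i, ¬ 0 < x + LinForm.eval u w (E i) →
      x + LinForm.eval u w (E i) < -((P * P) • u) := fun i hi => by
    simpa only [abs_of_nonpos (not_lt.1 hi), lt_neg] using hx i
  have hgap : ∀ i j, 0 < x + LinForm.eval u w (E i) → ¬ 0 < x + LinForm.eval u w (E j) →
      -LinForm.eval u' w' (E i) < -LinForm.eval u' w' (E j) - (P * P) • u' := by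
    intro i j hi hj
    have hG : (2 * (P * P)) • u < LinForm.eval u w (E i) - LinForm.eval u w (E j) := by
      have := add_lt_add (hpos i hi) (lt_neg.1 (hneg j hj))
      rwa [← add_zsmul, ← two_mul, show ∀ a b c : G, a + b + -(a + c) = b - c by intros; abel]
        at this
    have hG' := h.zsmul_lt_eval_sub (by
      rw [abs_of_pos (by exact_mod_cast mul_pos two_pos hPP)]
      push_cast
      linarith [hE i, hE j]) hG
    refine sub_pos.1 ?_
    rw [show ∀ a b c : G', -b - c - -a = (a - b) - c by intros; abel, sub_pos]
    exact (lt_add_of_pos_right _ (zsmul_pos hu'.isLeast.1 hPP)).trans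
      (by rwa [← add_zsmul, ← two_mul])
  have : Nontrivial G' := ⟨⟨u', 0, hu'.isLeast.1.ne'⟩⟩
  obtain ⟨g, hgL, hgU⟩ := exists_forall_le_and_forall_lt (fun i => 0 < x + LinForm.eval u w (E i))
    (fun i => -LinForm.eval u' w' (E i)) (fun i => -LinForm.eval u' w' (E i) - (P * P) • u') hgap
  obtain ⟨b', hb'r, hgb, hbg⟩ := hu'.exists_sub_mem_and_zsmul_mem_Ioc hP hP r g
  refine ⟨b', hb'r, fun i => ?_⟩
  by_cases hi : 0 < x + LinForm.eval u w (E i)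
  · rw [sign_pos hi, sign_pos (neg_lt_iff_pos_add.1 ((hgL i hi).trans_lt hgb))]
  · rw [sign_neg ((hneg i hi).trans (neg_lt_zero.2 (zsmul_pos hu hPP))),
      sign_neg (lt_neg_iff_add_neg.1 (hbg.trans_lt (lt_sub_iff_add_lt.1 (hgU i hi))))]

-- Multiplying each constraint `k • b + ℓ` by `N ! / k` gives them all the leading term `N ! • b`.
theorem Approx.exists_snoc_of_lt_abs (hu : IsZGroupUnit u) (hu' : IsZGroupUnit u')
    (h : Approx u u' (bump N) w w') {b : G}
    (hb : ∀ k : ℤ, 0 < k → k ≤ N → ∀ ℓ : LinForm n, ‖ℓ‖ ≤ N →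
      ((N ! : ℤ) * N !) • u < |k • b + LinForm.eval u w ℓ|) :
    ∃ b' : G', Approx u u' N (Fin.snoc w b) (Fin.snoc w' b') := by
  set P : ℤ := (N ! : ℤ)
  have hP : 0 < P := Int.natCast_pos.2 N.factorial_pos
  let ι := {j : ℤ × LinForm n // 0 < j.1 ∧ j.1 ≤ N ∧ ‖j.2‖ ≤ N}
  have : Finite ι := Set.Finite.to_subtype <|
    ((Set.finite_Icc (1 : ℤ) N).prod (LinForm.finite_setOf_norm_le N)).subset
      fun j hj => ⟨⟨hj.1, hj.2.1⟩, hj.2.2⟩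
  have hq : ∀ j : ι, P / j.1.1 * j.1.1 = P := fun j =>
    Int.ediv_mul_cancel (int_dvd_factorial j.2.1 j.2.2.1)
  have hq0 : ∀ j : ι, 0 < P / j.1.1 := fun j => by
    have := hq j; have := j.2.1; nlinarith
  have hqP : ∀ j : ι, P / j.1.1 ≤ P := fun j => by
    have := hq j; have := j.2.1; nlinarith
  obtain ⟨r, hr⟩ := hu.exists_sub_mem P hP b
  obtain ⟨b', hb'r, hsign⟩ := h.exists_sign_eq_of_lt_abs hu.isLeast.1 hu'
    (fun j : ι => (P / j.1.1) • j.1.2) hP (B := P * N)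
    (fun j => by
      rw [norm_smul, Int.norm_eq_abs, abs_of_pos (by exact_mod_cast hq0 j)]
      exact mul_le_mul (by exact_mod_cast hqP j) j.2.2.2 (norm_nonneg _) (by positivity))
    (by simpa [P] using gap_bound_le_bump N) (P • b)
    (fun j => by
      rw [← LinForm.zsmul_zsmul_add_eval (hq j), abs_zsmul, abs_of_pos (hq0 j)]
      exact (hb _ j.2.1 j.2.2.1 _ j.2.2.2).trans_le
        ((one_zsmul _).symm.trans_le (zsmul_le_zsmul_left (abs_nonneg _) (by
          have := hq0 j; omega))))
    r
  refine ⟨b', h.snoc (by linarith [two_mul_le_bump N]) ⟨r, hr, hb'r⟩ fun k hk hkN ℓ hℓ => ?_⟩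
  have := hsign ⟨(k, ℓ), hk, hkN, hℓ⟩
  rwa [← LinForm.zsmul_zsmul_add_eval (hq _), ← LinForm.zsmul_zsmul_add_eval (hq _),
    sign_zsmul_of_pos_left (hq0 _), sign_zsmul_of_pos_left (hq0 _)] at this

theorem Approx.exists_snoc (hu : IsZGroupUnit u) (hu' : IsZGroupUnit u')
    (h : Approx u u' (bump N) w w') (b : G) :
    ∃ b' : G', Approx u u' N (Fin.snoc w b) (Fin.snoc w' b') := by
  by_cases hexact : ∃ k : ℤ, 0 < k ∧ k ≤ N ∧ ∃ ℓ₀ : LinForm n,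
      ‖ℓ₀‖ ≤ N + (N ! : ℝ) * N ! ∧ k • b = LinForm.eval u w ℓ₀
  · obtain ⟨k, hk, hkN, ℓ₀, hℓ₀, hb⟩ := hexact
    exact h.exists_snoc_of_zsmul_eq hu.isLeast hk hkN hℓ₀ hb
  · refine h.exists_snoc_of_lt_abs hu hu' fun k hk hkN ℓ hℓ =>
      lt_abs_of_not_exists_zsmul_eq hu.isLeast fun ⟨ℓ₀, hℓ₀, hb⟩ => hexact ⟨k, hk, hkN, ℓ₀, ?_, hb⟩
    push_cast at hℓ₀
    linarith

end BackAndForth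

section Formulas

open Language

variable {G G' : Type*} [AddCommGroup G] [LinearOrder G] [IsOrderedAddMonoid G]
  [AddCommGroup G'] [LinearOrder G'] [IsOrderedAddMonoid G'] {u : G} {u' : G'} {n : ℕ}

def termCoeffs : oagLang.Term (Empty ⊕ Fin n) → Fin n → ℤ
  | .var (.inl e) => e.elim
  | .var (.inr i) => Pi.single i 1
  | .func (l := 0) _ _ => 0
  | .func (l := 1) _ ts => -termCoeffs (ts 0)
  | .func (l := 2) _ ts => termCoeffs (ts 0) + termCoeffs (ts 1)
  | .func (l := _ + 3) f _ => Empty.elim f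

theorem realize_eq_sum_termCoeffs (t : oagLang.Term (Empty ⊕ Fin n)) (w : Fin n → G) :
    t.realize (Sum.elim default w) = ∑ i, termCoeffs t i • w i := by
  induction t with
  | var x =>
    rcases x with e | i
    · exact e.elim
    · simp [termCoeffs, Pi.single_apply]
  | @func l f ts ih =>
    rcases l with _ | _ | _ | l
    · show (0 : G) = _
      simp [termCoeffs]
    · show -(ts 0).realize _ = _
      simp [termCoeffs, ih 0, neg_smul]
    · show (ts 0).realize _ + (ts 1).realize _ = _
      simp [termCoeffs, ih 0, ih 1, add_smul, Finset.sum_add_distrib]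
    · exact Empty.elim f

theorem realize_sub_realize_eq_eval (t₁ t₂ : oagLang.Term (Empty ⊕ Fin n)) (u : G)
    (w : Fin n → G) :
    t₁.realize (Sum.elim default w) - t₂.realize (Sum.elim default w) =
      LinForm.eval u w (termCoeffs t₁ - termCoeffs t₂, 0) := by
  simp [realize_eq_sum_termCoeffs, LinForm.eval_apply, sub_smul]

theorem exists_approx_sign_realize_sub (t₁ t₂ : oagLang.Term (Empty ⊕ Fin n)) :
    ∃ N : ℕ, ∀ (w : Fin n → G) (w' : Fin n → G'), Approx u u' N w w' →
      sign (t₁.realize (Sum.elim default w) - t₂.realize (Sum.elim default w)) =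
        sign (t₁.realize (Sum.elim default w') - t₂.realize (Sum.elim default w')) := by
  refine ⟨⌈‖((termCoeffs t₁ - termCoeffs t₂, 0) : LinForm n)‖⌉₊, fun w w' h => ?_⟩
  rw [realize_sub_realize_eq_eval t₁ t₂ u, realize_sub_realize_eq_eval t₁ t₂ u']
  exact h.2 _ (Nat.le_ceil _)

theorem exists_approx_realize_iff (hu : IsZGroupUnit u) (hu' : IsZGroupUnit u')
    (θ : oagLang.BoundedFormula Empty n) :
    ∃ N : ℕ, ∀ (w : Fin n → G) (w' : Fin n → G'), Approx u u' N w w' →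
      (θ.Realize default w ↔ θ.Realize default w') := by
  induction θ with
  | falsum => exact ⟨0, fun _ _ _ => Iff.rfl⟩
  | equal t₁ t₂ =>
    obtain ⟨N, hN⟩ := exists_approx_sign_realize_sub (u := u) (u' := u') t₁ t₂
    refine ⟨N, fun w w' h => ?_⟩
    simp only [BoundedFormula.Realize]
    rw [← sub_eq_zero, ← sign_eq_zero_iff, hN w w' h, sign_eq_zero_iff, sub_eq_zero]
  | @rel _ l R ts =>
    rcases l with _ | _ | _ | l
    · exact Empty.elim R
    · exact Empty.elim R
    · obtain ⟨N, hN⟩ := exists_approx_sign_realize_sub (u := u) (u' := u') (ts 0) (ts 1)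
      refine ⟨N, fun w w' h => ?_⟩
      show (ts 0).realize _ ≤ (ts 1).realize _ ↔ (ts 0).realize _ ≤ (ts 1).realize _
      rw [← sub_nonpos, ← sign_nonpos_iff, hN w w' h, sign_nonpos_iff, sub_nonpos]
    · exact Empty.elim R
  | imp θ χ ihθ ihχ =>
    obtain ⟨N₁, h₁⟩ := ihθ
    obtain ⟨N₂, h₂⟩ := ihχ
    exact ⟨max N₁ N₂, fun w w' h => imp_congr (h₁ w w' (h.mono (le_max_left _ _)))
      (h₂ w w' (h.mono (le_max_right _ _)))⟩
  | all θ ih =>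
    obtain ⟨N, hN⟩ := ih
    refine ⟨bump N, fun w w' h => ?_⟩
    simp only [BoundedFormula.realize_all]
    constructor
    · intro H b'
      obtain ⟨b, hb⟩ := h.symm.exists_snoc hu' hu b'
      exact (hN _ _ hb.symm).1 (H b)
    · intro H b
      obtain ⟨b', hb⟩ := h.exists_snoc hu hu' b
      exact (hN _ _ hb).2 (H b')

end Formulas

/-- Every regular discrete ordered abelian group is elementarily equivalent to
`(ℤ, +, <)` in the language of ordered groups. -/
theorem regular_discrete_elementarilyEquivalent_int {Γ : Type*} [AddCommGroup Γ] [LinearOrder Γ] [IsOrderedAddMonoid Γ]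
    (hreg : IsRegularOAG Γ)
    (hdisc : ∃ g : Γ, 0 < g ∧ ∀ h : Γ, 0 < h → g ≤ h) :
    Γ ≅[oagLang] ℤ := by
  obtain ⟨u, hu0, hmin⟩ := hdisc
  have hu : IsZGroupUnit u := hreg.isZGroupUnit ⟨hu0, hmin⟩
  refine Language.elementarilyEquivalent_iff.2 fun θ => ?_
  obtain ⟨N, hN⟩ := exists_approx_realize_iff hu isZGroupUnit_one θ
  exact hN _ _ (approx_nil hu0 one_pos _ _ N)
end

section
/- Let K be a field, v a henselian valuation on K with algebraically closed residue field of characteristic 0 and p-divisible value group for a prime p. Then every element of K is a p-th power in K. -/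
/-! Write `x ≠ 0` as `x = z ^ p * u`, where `z` has valuation a `p`-th root of `v x` (divisibility
of the value group) and `u` is a unit of the valuation ring. The residue of `u` has a `p`-th root
because the residue field is algebraically closed, and this root is a simple root of `X ^ p - ū`
because `p` is invertible in characteristic `0`; Hensel's lemma lifts it to a `p`-th root of `u`. -/

open Polynomial IsLocalRing

theorem HenselianLocalRing.exists_pow_eq_of_residue_pow_eq {R : Type*} [CommRing R]
    [HenselianLocalRing R] {n : ℕ} (hn : (n : ResidueField R) ≠ 0) {u : R} (hu : IsUnit u)
    {r : ResidueField R} (hr : r ^ n = residue R u) : ∃ a : R, a ^ n = u := by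
  have hn0 : n ≠ 0 := by rintro rfl; exact hn Nat.cast_zero
  have hr0 : r ≠ 0 := by
    rintro rfl
    exact (residue_ne_zero_iff_isUnit u).mpr hu (by rw [← hr, zero_pow hn0])
  obtain ⟨a₀, rfl⟩ := residue_surjective r
  obtain ⟨a, hroot, -⟩ := HenselianLocalRing.is_henselian (X ^ n - C u)
    (monic_X_pow_sub_C u hn0) a₀
    (by rw [← residue_eq_zero_iff]; simp [hr])
    (by
      rw [← residue_ne_zero_iff_isUnit]
      simpa [derivative_X_pow] using mul_ne_zero hn (pow_ne_zero (n - 1) hr0))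
  exact ⟨a, by simpa [sub_eq_zero] using hroot⟩

section Valuation

variable {K Γ₀ : Type*} [Field K] [LinearOrderedCommGroupWithZero Γ₀] (v : Valuation K Γ₀)

theorem Valuation.exists_pow_eq_of_valuation_eq_one (hh : HenselianLocalRing v.valuationSubring)
    {n : ℕ} (hn : (n : ResidueField v.valuationSubring) ≠ 0)
    (hroot : ∀ r : ResidueField v.valuationSubring, ∃ s, s ^ n = r) {u : K} (hu : v u = 1) :
    ∃ y : K, y ^ n = u := by
  let U : v.valuationSubring := ⟨u, (v.mem_valuationSubring_iff u).mpr hu.le⟩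
  obtain ⟨r, hr⟩ := hroot (residue _ U)
  obtain ⟨a, ha⟩ := HenselianLocalRing.exists_pow_eq_of_residue_pow_eq hn
    ((Valuation.valuationSubring.integers v).isUnit_of_one' hu) hr
  exact ⟨a, congrArg Subtype.val ha⟩

theorem Valuation.exists_valuation_div_pow_eq_one (hs : Function.Surjective v) {n : ℕ}
    (hdiv : ∀ γ : Γ₀ˣ, ∃ δ : Γ₀ˣ, δ ^ n = γ) {x : K} (hx : x ≠ 0) :
    ∃ z : K, z ≠ 0 ∧ v (x / z ^ n) = 1 := by
  obtain ⟨δ, hδ⟩ := hdiv (Units.mk0 (v x) (v.ne_zero_iff.mpr hx))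
  obtain ⟨z, hz⟩ := hs δ
  have hvz : v z ^ n = v x := by rw [hz, ← Units.val_pow_eq_pow_val, hδ, Units.val_mk0]
  refine ⟨z, fun h ↦ δ.ne_zero (by rw [← hz, h, map_zero]), ?_⟩
  rw [map_div₀, map_pow, hvz, div_self (v.ne_zero_iff.mpr hx)]

end Valuation

/-- Let `K` be a field and `v` a henselian valuation on `K` with algebraically
closed residue field of characteristic `0` and `p`-divisible value group, for a
prime `p`.  Then every element of `K` is a `p`-th power in `K`. -/
theorem pth_power_of_henselian {K Γ₀ : Type*} [Field K] [LinearOrderedCommGroupWithZero Γ₀]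
    (v : Valuation K Γ₀) (hs : Function.Surjective v)
    (hh : HenselianLocalRing v.valuationSubring)
    (halg : IsAlgClosed (IsLocalRing.ResidueField v.valuationSubring))
    (hchar : CharZero (IsLocalRing.ResidueField v.valuationSubring))
    (p : ℕ) (hp : p.Prime)
    (hdiv : ∀ γ : Γ₀ˣ, ∃ δ : Γ₀ˣ, δ ^ p = γ) :
    ∀ x : K, ∃ y : K, y ^ p = x := by
  intro x
  rcases eq_or_ne x 0 with rfl | hx
  · exact ⟨0, zero_pow hp.ne_zero⟩
  obtain ⟨z, hz, hvu⟩ := v.exists_valuation_div_pow_eq_one hs hdiv hx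
  obtain ⟨y, hy⟩ := v.exists_pow_eq_of_valuation_eq_one hh (Nat.cast_ne_zero.mpr hp.ne_zero)
    (fun r ↦ IsAlgClosed.exists_pow_nat_eq r hp.pos) hvu
  exact ⟨y * z, by rw [mul_pow, hy, div_mul_cancel₀ _ (pow_ne_zero _ hz)]⟩
end

section
/- Let v, w be henselian valuations on a field K, both with non-divisible regular dense value groups and both with residue fields of characteristic 0. Then the valuation rings O_v and O_w are equal. -/
/-- A convex subgroup of a (multiplicatively written) linearly ordered commutative group. -/
def IsConvexSubgroup {G : Type*} [CommGroup G] [LinearOrder G] [IsOrderedMonoid G] (H : Subgroup G) : Prop :=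
  ∀ h ∈ H, ∀ g : G, 1 ≤ g → g ≤ h → g ∈ H

/-- A (multiplicatively written) group is divisible if every element has `n`-th
roots for all `n ≠ 0`. -/
def IsDivisibleGroup (G : Type*) [CommGroup G] : Prop :=
  ∀ x : G, ∀ n : ℕ, n ≠ 0 → ∃ y : G, y ^ n = x

/-- A regular linearly ordered commutative group: every quotient by a
nontrivial convex subgroup is divisible. -/
def IsRegularGroup (G : Type*) [CommGroup G] [LinearOrder G] [IsOrderedMonoid G] : Prop :=
  ∀ H : Subgroup G, IsConvexSubgroup H → H ≠ ⊥ →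
    ∀ x : G ⧸ H, ∀ n : ℕ, n ≠ 0 → ∃ y : G ⧸ H, y ^ n = x

/-- A dense linearly ordered commutative group: nontrivial, without a minimal
element `> 1`. -/
def IsDenseGroup (G : Type*) [CommGroup G] [LinearOrder G] [IsOrderedMonoid G] : Prop :=
  (∃ g : G, g ≠ 1) ∧ ¬ ∃ g : G, 1 < g ∧ ∀ h : G, 1 < h → g ≤ h

/-!
If `𝒪_v ⊊ 𝒪_w`, the `v`-values of the `𝒪_w`-units form a nontrivial convex subgroup `Δ` of
`Γ_v` with `Γ_v / Δ ≅ Γ_w`, so regularity of `Γ_v` makes `Γ_w` divisible.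

If `𝒪_v` and `𝒪_w` are incomparable, pick `t` with `v t < 1 < w t`. Hensel's lemma in residue
characteristic `0` makes every `x` with `v x < 1 < w x` an `n`-th power, via
`x = (1 + x) / (1 + x⁻¹)`, and every unit of the coarsening `C = 𝒪_v 𝒪_w` is a quotient of two
such elements up to factors of `t`. Since `C ≠ 𝒪_v`, regularity of `Γ_v` writes every element of
`Kˣ` as an `n`-th power times a unit of `C`, so `Γ_v` is divisible.
-/

open IsLocalRing

theorem IsLocalRing.isUnit_natCast_of_charZero_residueField {R : Type*} [CommRing R]
    [IsLocalRing R] [CharZero (ResidueField R)] {n : ℕ} (hn : n ≠ 0) : IsUnit (n : R) := by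
  rw [← residue_ne_zero_iff_isUnit, map_natCast]
  exact Nat.cast_ne_zero.mpr hn

open Polynomial in
theorem HenselianLocalRing.exists_pow_eq_of_sub_one_mem {R : Type*} [CommRing R]
    [HenselianLocalRing R] {u : R} (hu : u - 1 ∈ maximalIdeal R) {n : ℕ} (hn : IsUnit (n : R)) :
    ∃ y : R, y ^ n = u := by
  have hn0 : n ≠ 0 := by
    rintro rfl
    exact not_isUnit_zero (Nat.cast_zero (R := R) ▸ hn)
  obtain ⟨y, hy, -⟩ := HenselianLocalRing.is_henselian (X ^ n - C u) (monic_X_pow_sub_C u hn0) 1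
    (by simpa using neg_mem hu) (by simpa [derivative_X_pow] using hn)
  exact ⟨y, sub_eq_zero.mp (by simpa using hy)⟩

section Valuations

variable {K : Type*} [Field K] {Γ Γ' : Type*} [LinearOrderedCommGroupWithZero Γ]
  [LinearOrderedCommGroupWithZero Γ']

theorem Valuation.exists_pow_eq_of_map_sub_one_lt_one (v : Valuation K Γ)
    [HenselianLocalRing v.valuationSubring] [CharZero (ResidueField v.valuationSubring)]
    {u : K} (hu : v (u - 1) < 1) {n : ℕ} (hn : n ≠ 0) : ∃ y : K, y ^ n = u := by
  have hu1 : v u = 1 := by simpa using v.map_one_add_of_lt hu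
  obtain ⟨y, hy⟩ := HenselianLocalRing.exists_pow_eq_of_sub_one_mem
    (u := (⟨u, hu1.le⟩ : v.valuationSubring)) (v.mem_maximalIdeal_iff.mpr hu)
    (isUnit_natCast_of_charZero_residueField hn)
  exact ⟨y, congrArg Subtype.val hy⟩

theorem exists_pow_eq_of_lt_one_of_one_lt (v : Valuation K Γ) (w : Valuation K Γ')
    [HenselianLocalRing v.valuationSubring] [CharZero (ResidueField v.valuationSubring)]
    [HenselianLocalRing w.valuationSubring] [CharZero (ResidueField w.valuationSubring)]
    {x : K} (hvx : v x < 1) (hwx : 1 < w x) {n : ℕ} (hn : n ≠ 0) : ∃ y : K, y ^ n = x := by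
  have hx0 : x ≠ 0 := by rintro rfl; simp at hwx
  have hwx' : w x⁻¹ < 1 := (w.one_lt_val_iff hx0).mp hwx
  obtain ⟨a, ha⟩ := v.exists_pow_eq_of_map_sub_one_lt_one (u := 1 + x) (by simpa using hvx) hn
  obtain ⟨b, hb⟩ := w.exists_pow_eq_of_map_sub_one_lt_one (u := 1 + x⁻¹) (by simpa using hwx') hn
  have hx1 : x + 1 ≠ 0 := by
    intro h
    have h1 := v.map_one_add_of_lt hvx
    rw [add_comm, h, map_zero] at h1
    exact zero_ne_one h1
  refine ⟨a / b, ?_⟩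
  rw [div_pow, ha, hb]
  field_simp
  ring

namespace Valuation

variable (v : Valuation K Γ)

theorem isDivisibleGroup_units_of_surjective (hv : Function.Surjective v)
    (h : ∀ x : K, x ≠ 0 → ∀ n : ℕ, n ≠ 0 → ∃ y : K, v x = v y ^ n) :
    IsDivisibleGroup Γˣ := by
  intro γ n hn
  obtain ⟨x, hx⟩ := hv γ
  obtain ⟨y, hy⟩ := h x (by rintro rfl; exact γ.ne_zero (by simp [← hx])) n hn
  have hy0 : v y ≠ 0 := fun h0 => γ.ne_zero (by rw [← hx, hy, h0, zero_pow hn])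
  exact ⟨Units.mk0 (v y) hy0, Units.ext (by simp [← hx, hy])⟩

/-- For `C ⊇ 𝒪_v` this is the convex subgroup of `Γˣ` corresponding to the coarsening `C` of `v`. -/
def unitValues (C : Subring K) : Subgroup Γˣ where
  carrier := {γ | ∃ x ∈ C, x⁻¹ ∈ C ∧ v x = γ}
  one_mem' := ⟨1, C.one_mem, by simp [C.one_mem], by simp⟩
  mul_mem' := by
    rintro _ _ ⟨x, hx, hx', hvx⟩ ⟨y, hy, hy', hvy⟩
    exact ⟨x * y, C.mul_mem hx hy, by simpa [mul_inv, mul_comm] using C.mul_mem hx' hy',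
      by simp [hvx, hvy]⟩
  inv_mem' := by
    rintro _ ⟨x, hx, hx', hvx⟩
    exact ⟨x⁻¹, hx', by simpa using hx, by simp [hvx]⟩

variable {v} {C : Subring K}

theorem isConvexSubgroup_unitValues (hv : Function.Surjective v)
    (hC : v.valuationSubring.toSubring ≤ C) : IsConvexSubgroup (v.unitValues C) := by
  rintro _ ⟨x, hx, hx', hvx⟩ γ hγ hγx
  obtain ⟨z, hz⟩ := hv γ
  have hx0 : v x ≠ 0 := by simp [hvx]
  have hzx : v (z * x⁻¹) ≤ 1 := by
    rw [map_mul, map_inv₀, hz, hvx, ← Units.val_inv_eq_inv_val, ← Units.val_mul]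
    exact_mod_cast mul_inv_le_one_iff_le.mpr hγx
  refine ⟨z, ?_, hC ?_, hz⟩
  · simpa [hx0, (v.ne_zero_iff).mp hx0] using C.mul_mem (hC hzx) hx
  · show v z⁻¹ ≤ 1
    rw [map_inv₀, hz, ← Units.val_inv_eq_inv_val]
    exact_mod_cast inv_le_one'.mpr hγ

theorem unitValues_ne_bot (hC : v.valuationSubring.toSubring < C) : v.unitValues C ≠ ⊥ := by
  obtain ⟨b, hbC, hb⟩ := SetLike.exists_of_lt hC
  have hvb : 1 < v b := not_le.mp hb
  have hb0 : b ≠ 0 := by rintro rfl; simp at hvb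
  have hb' : v b⁻¹ ≤ 1 := ((v.one_lt_val_iff hb0).mp hvb).le
  intro hbot
  have hmem : Units.mk0 (v b) (v.ne_zero_iff.mpr hb0) ∈ v.unitValues C :=
    ⟨b, hbC, hC.le hb', rfl⟩
  rw [hbot, Subgroup.mem_bot, Units.ext_iff, Units.val_mk0, Units.val_one] at hmem
  exact hvb.ne' hmem

/-- By regularity, every `v x` is an `n`-th power modulo the convex subgroup `v.unitValues C`. -/
theorem exists_eq_pow_mul_of_lt (hv : Function.Surjective v) (hreg : IsRegularGroup Γˣ)
    (hC : v.valuationSubring.toSubring < C) {x : K} (hx : x ≠ 0) {n : ℕ} (hn : n ≠ 0) :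
    ∃ z u : K, u ∈ C ∧ u⁻¹ ∈ C ∧ x = z ^ n * u := by
  obtain ⟨q, hq⟩ := hreg _ (isConvexSubgroup_unitValues hv hC.le) (unitValues_ne_bot hC)
    (Units.mk0 (v x) (v.ne_zero_iff.mpr hx)) n hn
  obtain ⟨η, rfl⟩ := QuotientGroup.mk_surjective q
  rw [← QuotientGroup.mk_pow] at hq
  obtain ⟨u, hu, hu', hvu⟩ := QuotientGroup.eq.mp hq
  obtain ⟨z, hz⟩ := hv η
  set y := z ^ n * u
  have hvy : v y = v x := by
    rw [map_mul, map_pow, hz, hvu, ← Units.val_pow_eq_pow_val, ← Units.val_mul,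
      mul_inv_cancel_left, Units.val_mk0]
  have hy0 : y ≠ 0 := v.ne_zero_iff.mp (hvy ▸ v.ne_zero_iff.mpr hx)
  have hvx0 : v x ≠ 0 := v.ne_zero_iff.mpr hx
  have hxy : x / y ∈ C := hC.le (show v (x / y) ≤ 1 by rw [map_div₀, hvy, div_self hvx0])
  have hyx : y / x ∈ C := hC.le (show v (y / x) ≤ 1 by rw [map_div₀, hvy, div_self hvx0])
  refine ⟨z, u * (x / y), C.mul_mem hu hxy, ?_, ?_⟩
  · simpa [mul_inv, inv_div, mul_comm] using C.mul_mem hu' hyx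
  · rw [← mul_assoc]
    exact (mul_div_cancel₀ x hy0).symm

end Valuation

section Incomparable

variable (v : Valuation K Γ) (w : Valuation K Γ')

theorem exists_lt_one_one_lt_of_not_le (hvw : ¬ v.valuationSubring ≤ w.valuationSubring)
    (hwv : ¬ w.valuationSubring ≤ v.valuationSubring) : ∃ t : K, v t < 1 ∧ 1 < w t := by
  obtain ⟨a, hva, hwa⟩ := SetLike.not_le_iff_exists.mp hvw
  obtain ⟨b, hwb, hvb⟩ := SetLike.not_le_iff_exists.mp hwv
  have hvb : 1 < v b := not_le.mp hvb
  have hb0 : b ≠ 0 := by rintro rfl; simp at hvb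
  refine ⟨a * b⁻¹, ?_, ?_⟩
  · rw [map_mul]
    exact Right.mul_lt_one_of_le_of_lt hva ((v.one_lt_val_iff hb0).mp hvb)
  · rw [map_mul, map_inv₀]
    exact (not_le.mp hwa).trans_le
      (le_mul_of_one_le_right' ((one_le_inv₀ (w.pos_iff.mpr hb0)).mpr hwb))

variable {v w}

theorem valuation_mul_lt_one_one_lt {z s : K} (hvz : v z ≤ 1) (hwz : 1 ≤ w z) (hvs : v s < 1)
    (hws : 1 < w s) : v (z * s) < 1 ∧ 1 < w (z * s) := by
  rw [map_mul, map_mul]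
  exact ⟨Right.mul_lt_one_of_le_of_lt hvz hvs, Right.one_lt_mul_of_le_of_lt hwz hws⟩

/-- The elements whose `w`-value is bounded by that of some `s` with `v s < 1 < w s` form a subring
containing `𝒪_v` and `𝒪_w`. -/
theorem exists_valuation_le_of_mem_sup {t : K} (htv : v t < 1) (htw : 1 < w t) {z : K}
    (hz : z ∈ v.valuationSubring.toSubring ⊔ w.valuationSubring.toSubring) :
    ∃ s : K, v s < 1 ∧ 1 < w s ∧ w z ≤ w s := by
  let E : Subring K :=
    { carrier := {z | ∃ s : K, v s < 1 ∧ 1 < w s ∧ w z ≤ w s}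
      zero_mem' := ⟨t, htv, htw, by simp⟩
      one_mem' := ⟨t, htv, htw, by simpa using htw.le⟩
      neg_mem' := by simp
      add_mem' := by
        rintro z₁ z₂ ⟨s₁, hv₁, hw₁, hz₁⟩ ⟨s₂, hv₂, hw₂, hz₂⟩
        refine ⟨s₁ * s₂, (valuation_mul_lt_one_one_lt hv₁.le hw₁.le hv₂ hw₂).1,
          (valuation_mul_lt_one_one_lt hv₁.le hw₁.le hv₂ hw₂).2, ?_⟩
        rw [map_mul]
        exact (w.map_add z₁ z₂).trans (max_le (hz₁.trans (le_mul_of_one_le_right' hw₂.le))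
          (hz₂.trans (le_mul_of_one_le_left' hw₁.le)))
      mul_mem' := by
        rintro z₁ z₂ ⟨s₁, hv₁, hw₁, hz₁⟩ ⟨s₂, hv₂, hw₂, hz₂⟩
        refine ⟨s₁ * s₂, (valuation_mul_lt_one_one_lt hv₁.le hw₁.le hv₂ hw₂).1,
          (valuation_mul_lt_one_one_lt hv₁.le hw₁.le hv₂ hw₂).2, ?_⟩
        rw [map_mul, map_mul]
        exact mul_le_mul' hz₁ hz₂ }
  have hvE : v.valuationSubring.toSubring ≤ E := by
    intro y (hy : v y ≤ 1)
    rcases le_or_gt (w y) 1 with hwy | hwy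
    · exact ⟨t, htv, htw, hwy.trans htw.le⟩
    · obtain ⟨hv, hw⟩ := valuation_mul_lt_one_one_lt hy hwy.le htv htw
      exact ⟨y * t, hv, hw, by rw [map_mul]; exact le_mul_of_one_le_right' htw.le⟩
  have hwE : w.valuationSubring.toSubring ≤ E := fun y (hy : w y ≤ 1) =>
    ⟨t, htv, htw, hy.trans htw.le⟩
  exact sup_le hvE hwE hz

variable [HenselianLocalRing v.valuationSubring] [CharZero (ResidueField v.valuationSubring)]
  [HenselianLocalRing w.valuationSubring] [CharZero (ResidueField w.valuationSubring)]

theorem exists_pow_eq_of_le_one_of_one_le {t : K} (htv : v t < 1) (htw : 1 < w t) {z : K}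
    (hvz : v z ≤ 1) (hwz : 1 ≤ w z) {n : ℕ} (hn : n ≠ 0) : ∃ y : K, y ^ n = z := by
  have ht0 : t ≠ 0 := by rintro rfl; simp at htw
  obtain ⟨hvzt, hwzt⟩ := valuation_mul_lt_one_one_lt hvz hwz htv htw
  obtain ⟨a, ha⟩ := exists_pow_eq_of_lt_one_of_one_lt v w hvzt hwzt hn
  obtain ⟨b, hb⟩ := exists_pow_eq_of_lt_one_of_one_lt v w htv htw hn
  exact ⟨a / b, by rw [div_pow, ha, hb, mul_div_cancel_right₀ z ht0]⟩

theorem exists_pow_eq_of_mem_sup (hvw : ¬ v.valuationSubring ≤ w.valuationSubring)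
    (hwv : ¬ w.valuationSubring ≤ v.valuationSubring) {x : K}
    (hx : x ∈ v.valuationSubring.toSubring ⊔ w.valuationSubring.toSubring)
    (hx' : x⁻¹ ∈ v.valuationSubring.toSubring ⊔ w.valuationSubring.toSubring) (hx0 : x ≠ 0)
    {n : ℕ} (hn : n ≠ 0) : ∃ y : K, y ^ n = x := by
  obtain ⟨t, htv, htw⟩ := exists_lt_one_one_lt_of_not_le v w hvw hwv
  wlog hvx : v x ≤ 1 generalizing x
  · obtain ⟨y, hy⟩ := this hx' (by rwa [inv_inv]) (inv_ne_zero hx0)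
      (by rw [map_inv₀]; exact inv_le_one_of_one_le₀ (not_le.mp hvx).le)
    exact ⟨y⁻¹, by rw [inv_pow, hy, inv_inv]⟩
  obtain ⟨s, hvs, hws, hxs⟩ := exists_valuation_le_of_mem_sup htv htw hx'
  have hwxs : 1 ≤ w (x * s) := by
    rw [map_mul]
    calc 1 = w x * w x⁻¹ := by rw [← map_mul, mul_inv_cancel₀ hx0, map_one]
      _ ≤ w x * w s := mul_le_mul_right hxs _
  have hs0 : s ≠ 0 := by rintro rfl; simp at hws
  obtain ⟨a, ha⟩ := exists_pow_eq_of_le_one_of_one_le htv htw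
    (by rw [map_mul]; exact mul_le_one' hvx hvs.le) hwxs hn
  obtain ⟨b, hb⟩ := exists_pow_eq_of_le_one_of_one_le htv htw hvs.le hws.le hn
  exact ⟨a / b, by rw [div_pow, ha, hb, mul_div_cancel_right₀ x hs0]⟩

end Incomparable

variable {v : Valuation K Γ} {w : Valuation K Γ'}

theorem isDivisibleGroup_units_of_valuationSubring_lt (hv : Function.Surjective v)
    (hw : Function.Surjective w) (hreg : IsRegularGroup Γˣ)
    (hlt : v.valuationSubring < w.valuationSubring) : IsDivisibleGroup Γ'ˣ := by
  refine w.isDivisibleGroup_units_of_surjective hw fun x hx n hn => ?_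
  obtain ⟨z, u, hu, hu', rfl⟩ := v.exists_eq_pow_mul_of_lt hv hreg hlt hx hn
  have hwu : w u = 1 := le_antisymm hu
    ((inv_le_one₀ (w.pos_iff.mpr (right_ne_zero_of_mul hx))).mp (map_inv₀ w u ▸ hu'))
  exact ⟨z, by rw [map_mul, map_pow, hwu, mul_one]⟩

theorem isDivisibleGroup_units_of_not_le_of_not_le
    [HenselianLocalRing v.valuationSubring] [CharZero (ResidueField v.valuationSubring)]
    [HenselianLocalRing w.valuationSubring] [CharZero (ResidueField w.valuationSubring)]
    (hv : Function.Surjective v) (hreg : IsRegularGroup Γˣ)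
    (hvw : ¬ v.valuationSubring ≤ w.valuationSubring)
    (hwv : ¬ w.valuationSubring ≤ v.valuationSubring) : IsDivisibleGroup Γˣ := by
  refine v.isDivisibleGroup_units_of_surjective hv fun x hx n hn => ?_
  obtain ⟨z, u, hu, hu', rfl⟩ := v.exists_eq_pow_mul_of_lt hv hreg
    (lt_of_le_not_ge le_sup_left fun h => hwv (le_sup_right.trans h)) hx hn
  obtain ⟨y, rfl⟩ := exists_pow_eq_of_mem_sup hvw hwv hu hu' (right_ne_zero_of_mul hx) hn
  exact ⟨z * y, by rw [← mul_pow, map_pow]⟩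

end Valuations

theorem valuationSubring_unique_general {K : Type*} [Field K]
    {Γv Γw : Type*} [LinearOrderedCommGroupWithZero Γv] [LinearOrderedCommGroupWithZero Γw]
    (v : Valuation K Γv) (w : Valuation K Γw)
    (hsv : Function.Surjective v) (hsw : Function.Surjective w)
    (hhv : HenselianLocalRing v.valuationSubring)
    (hhw : HenselianLocalRing w.valuationSubring)
    (hregv : IsRegularGroup Γvˣ) (hregw : IsRegularGroup Γwˣ)
    (hndv : ¬ IsDivisibleGroup Γvˣ) (hndw : ¬ IsDivisibleGroup Γwˣ)
    (hcharv : CharZero (IsLocalRing.ResidueField v.valuationSubring))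
    (hcharw : CharZero (IsLocalRing.ResidueField w.valuationSubring)) :
    v.valuationSubring = w.valuationSubring := by
  by_cases hvw : v.valuationSubring ≤ w.valuationSubring <;>
    by_cases hwv : w.valuationSubring ≤ v.valuationSubring
  · exact le_antisymm hvw hwv
  · exact absurd (isDivisibleGroup_units_of_valuationSubring_lt hsv hsw hregv
      (lt_of_le_not_ge hvw hwv)) hndw
  · exact absurd (isDivisibleGroup_units_of_valuationSubring_lt hsw hsv hregw
      (lt_of_le_not_ge hwv hvw)) hndv
  · exact absurd (isDivisibleGroup_units_of_not_le_of_not_le hsv hregv hvw hwv) hndv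

/-- Let `v`, `w` be henselian valuations on a field `K`, both with non-divisible
regular dense value groups and residue fields of characteristic `0`.
Then the valuation rings `O_v` and `O_w` are equal. -/
theorem valuationSubring_unique {K : Type*} [Field K]
    {Γv Γw : Type*} [LinearOrderedCommGroupWithZero Γv] [LinearOrderedCommGroupWithZero Γw]
    (v : Valuation K Γv) (w : Valuation K Γw)
    (hsv : Function.Surjective v) (hsw : Function.Surjective w)
    (hhv : HenselianLocalRing v.valuationSubring)
    (hhw : HenselianLocalRing w.valuationSubring)
    (hregv : IsRegularGroup Γvˣ) (hregw : IsRegularGroup Γwˣ)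
    (hdenv : IsDenseGroup Γvˣ) (hdenw : IsDenseGroup Γwˣ)
    (hndv : ¬ IsDivisibleGroup Γvˣ) (hndw : ¬ IsDivisibleGroup Γwˣ)
    (hcharv : CharZero (IsLocalRing.ResidueField v.valuationSubring))
    (hcharw : CharZero (IsLocalRing.ResidueField w.valuationSubring)) :
    v.valuationSubring = w.valuationSubring :=
  valuationSubring_unique_general v w hsv hsw hhv hhw hregv hregw hndv hndw hcharv hcharw
end
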